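/- arXiv:2109.13969 — 4 statements merged into one kernel-verified Lean document; each statement's English description precedes it below -/
import Mathlib

section
/- Let r ≥ 2 be fixed, let β > r−2 be a real number, and let F be a family of connected r-uniform hypergraphs. If for every n the edge set of the complete r-partite r-uniform hypergraph K_{n,…,n}^{(r)} (with n vertices in each part) can be colored with O(n^β) colors so that no color class contains a member of F, then for every n the edge set of the complete r-uniform hypergraph K_n^{(r)} can be colored with O(n^β) colors so that no color class contains a member of F. -/
/-- The set of vertices covered by some edge of a hypergraph, given by its edge set. -/
def hSupp {V : Type*} (E : Set (Finset V)) : Set V := {v | ∃ e ∈ E, v ∈ e}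

/-- `HContains F H` : the hypergraph with edge set `H` contains a copy of the hypergraph
with edge set `F` as a subhypergraph, i.e. there is a map of vertices, injective on the
support of `F`, sending every edge of `F` to an edge of `H`. -/
def HContains {W V : Type*} [DecidableEq V] (F : Set (Finset W)) (H : Set (Finset V)) : Prop :=
  ∃ f : W → V, Set.InjOn f (hSupp F) ∧ ∀ e ∈ F, e.image f ∈ H

/-- A hypergraph (given by its edge set) is connected: any two vertices of its support are
joined by a chain of overlapping hyperedges. -/
def HConnected {V : Type*} (E : Set (Finset V)) : Prop :=
  ∀ u ∈ hSupp E, ∀ v ∈ hSupp E,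
    Relation.ReflTransGen (fun x y => ∃ e ∈ E, x ∈ e ∧ y ∈ e) u v

/-- The edge set of the complete `r`-partite `r`-uniform hypergraph whose parts are
`{i} × Fin n` for `i : Fin r`: the edges are exactly the transversals of the parts. -/
def partiteEdges (r n : ℕ) : Set (Finset (Fin r × Fin n)) :=
  {e | ∃ x : Fin r → Fin n, e = Finset.univ.image fun i => (i, x i)}

/-!
Sort the vertices of an `r`-set as `v₀ < ⋯ < v_{r-1}`; for each of the `r - 1` gaps let `p_g`
be the highest bit in which `v_g` and `v_{g+1}` differ, and let `t` be the least `p_g`. Colour the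
set by `t`, the pairs `(p_g, x_g)` with `x_g = ⌊v_{g+1} / 2^t⌋ - ⌊v_g / 2^t⌋`, the table of the
bits of every `v_i` at every `p_g`, and the colour of the transversal `{(i, v_i mod 2^t)}` in the
given colouring of `K^{(r)}_{2^t,…,2^t}`.

Within a colour class the bit table tells the position `i` of a vertex `w` (for `i < k` the
highest bit where `v_i` and `v_k` differ is some `p_g`), and `⌊w / 2^t⌋ - (x_0 + ⋯ + x_{i-1})` is
constant on every edge, hence on every connected copy of a member of `F`. Since `w` is recovered
from `i`, `w mod 2^t` and that level, `w ↦ (i, w mod 2^t)` embeds the copy into one colour class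
of the partite colouring.

For fixed `t` there are `O(2^{(L-t)(r-2)})` gap data (`x_g < 2^{p_g+1-t}`, and the minimal gap
is `(t, 1)`), so with `n ≤ 2^L ≤ 2n` the number of colours is
`O(∑_{t ≤ L} 2^{(L-t)(r-2)} 2^{tβ}) = O(2^{Lβ}) = O(n^β)` because `β > r - 2`.
-/

open Finset Function

lemma Nat.sub_lt_of_div_eq_div {a b K : ℕ} (hK : 0 < K) (h : a / K = b / K) : b - a < K := by
  have ha := Nat.mod_add_div a K
  have hb := Nat.mod_add_div b K
  rw [h] at ha
  have := Nat.mod_lt b hK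
  omega

lemma Nat.div_two_pow_succ (u p : ℕ) : u / 2 ^ (p + 1) = u / 2 ^ p / 2 := by
  rw [pow_succ, Nat.div_div_eq_div_mul]

lemma Nat.eq_of_two_pow_add_eq {a b x y : ℕ} (hx : x < 2 ^ a) (hy : y < 2 ^ b)
    (h : 2 ^ a + x = 2 ^ b + y) : a = b ∧ x = y := by
  have hlog : ∀ {c z : ℕ}, z < 2 ^ c → Nat.log 2 (2 ^ c + z) = c := fun hz =>
    (Nat.log_eq_iff (Or.inr ⟨one_lt_two, by positivity⟩)).2 ⟨by omega, by rw [pow_succ]; omega⟩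
  have hab : a = b := by rw [← hlog hx, ← hlog hy, h]
  subst hab
  exact ⟨rfl, by omega⟩

lemma Fin.exists_castSucc_le_lt_succ {n : ℕ} {f : Fin (n + 1) → ℕ} (hf : Monotone f)
    {i k : Fin (n + 1)} {c : ℕ} (hi : f i ≤ c) (hk : c < f k) :
    ∃ g : Fin n, i ≤ g.castSucc ∧ g.succ ≤ k ∧ f g.castSucc ≤ c ∧ c < f g.succ := by
  classical
  set S := univ.filter fun j => c < f j
  have hkS : k ∈ S := by simp [S, hk]
  have hj : c < f (S.min' ⟨k, hkS⟩) := (mem_filter.1 (S.min'_mem _)).2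
  have hij : i < S.min' ⟨k, hkS⟩ := lt_of_not_ge fun h => (hj.trans_le (hf h)).not_ge hi
  obtain ⟨g, hg⟩ := Fin.exists_succ_eq.2 (Fin.ne_zero_of_lt hij)
  rw [← hg] at hj hij
  refine ⟨g, Fin.le_castSucc_iff.2 hij, hg ▸ S.min'_le k hkS, le_of_not_gt fun h => ?_, hj⟩
  exact (Fin.castSucc_lt_succ (i := g)).not_ge (hg ▸ S.min'_le _ (by simp [S, h]))

lemma exists_div_two_pow_eq (u v : ℕ) : ∃ s, u / 2 ^ s = v / 2 ^ s :=
  ⟨u + v, by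
    rw [Nat.div_eq_of_lt (Nat.lt_two_pow_self.trans_le (Nat.pow_le_pow_right two_pos (by omega))),
      Nat.div_eq_of_lt (Nat.lt_two_pow_self.trans_le (Nat.pow_le_pow_right two_pos (by omega)))]⟩

/-- For `u ≠ v`, one more than the position of the highest bit in which `u` and `v` differ. -/
def splitScale (u v : ℕ) : ℕ := Nat.find (exists_div_two_pow_eq u v)

lemma div_two_pow_eq_iff {u v s : ℕ} : u / 2 ^ s = v / 2 ^ s ↔ splitScale u v ≤ s := by
  refine ⟨fun h => Nat.find_min' _ h, fun h => ?_⟩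
  obtain ⟨d, rfl⟩ := Nat.exists_eq_add_of_le h
  rw [pow_add, ← Nat.div_div_eq_div_mul, ← Nat.div_div_eq_div_mul]
  exact congrArg (· / 2 ^ d) (Nat.find_spec (exists_div_two_pow_eq u v))

lemma splitScale_pos {u v : ℕ} (h : u ≠ v) : 0 < splitScale u v :=
  Nat.pos_of_ne_zero fun h0 => h (by simpa using div_two_pow_eq_iff.2 h0.le)

lemma splitScale_le {u v L : ℕ} (hu : u < 2 ^ L) (hv : v < 2 ^ L) : splitScale u v ≤ L :=
  div_two_pow_eq_iff.1 (by rw [Nat.div_eq_of_lt hu, Nat.div_eq_of_lt hv])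

lemma splitScale_eq_succ {u v p : ℕ} (h : u / 2 ^ (p + 1) = v / 2 ^ (p + 1))
    (hne : u / 2 ^ p ≠ v / 2 ^ p) : splitScale u v = p + 1 :=
  le_antisymm (div_two_pow_eq_iff.1 h) (lt_of_not_ge (mt div_two_pow_eq_iff.2 hne))

section Tuple

variable {m : ℕ} (v : Fin (m + 2) → ℕ)

def gapBit (g : Fin (m + 1)) : ℕ := splitScale (v g.castSucc) (v g.succ) - 1

def minGapBit : ℕ := univ.inf' univ_nonempty (gapBit v)

def gapJump (g : Fin (m + 1)) : ℕ := v g.succ / 2 ^ minGapBit v - v g.castSucc / 2 ^ minGapBit v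

def bitTable (i : Fin (m + 2)) (g : Fin (m + 1)) : Bool := (v i).testBit (gapBit v g)

variable {v}

lemma minGapBit_le (g : Fin (m + 1)) : minGapBit v ≤ gapBit v g := inf'_le _ (mem_univ g)

lemma exists_gapBit_eq_minGapBit : ∃ g, gapBit v g = minGapBit v := by
  obtain ⟨g, -, h⟩ := exists_mem_eq_inf' univ_nonempty (gapBit v)
  exact ⟨g, h.symm⟩

variable (hv : StrictMono v)
include hv

lemma splitScale_gap (g : Fin (m + 1)) :
    splitScale (v g.castSucc) (v g.succ) = gapBit v g + 1 := by
  have := splitScale_pos (hv (Fin.castSucc_lt_succ (i := g))).ne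
  unfold gapBit
  omega

lemma gapBit_lt {L : ℕ} (hL : ∀ i, v i < 2 ^ L) (g : Fin (m + 1)) : gapBit v g < L := by
  have := splitScale_le (hL g.castSucc) (hL g.succ)
  rw [splitScale_gap hv] at this
  omega

lemma gapJump_lt (g : Fin (m + 1)) : gapJump v g < 2 ^ (gapBit v g + 1 - minGapBit v) := by
  refine Nat.sub_lt_of_div_eq_div (by positivity) ?_
  rw [Nat.div_div_eq_div_mul, Nat.div_div_eq_div_mul, ← pow_add,
    Nat.add_sub_cancel' ((minGapBit_le g).trans (Nat.le_succ _))]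
  exact div_two_pow_eq_iff.2 (splitScale_gap hv g).le

lemma gapJump_eq_one {g : Fin (m + 1)} (hg : gapBit v g = minGapBit v) : gapJump v g = 1 := by
  have hne : v g.castSucc / 2 ^ minGapBit v ≠ v g.succ / 2 ^ minGapBit v := fun h => by
    have := div_two_pow_eq_iff.1 h
    rw [splitScale_gap hv] at this
    omega
  have hle := Nat.div_le_div_right (c := 2 ^ minGapBit v) (hv (Fin.castSucc_lt_succ (i := g))).le
  have heq := div_two_pow_eq_iff.2 (splitScale_gap hv g).le
  rw [hg, Nat.div_two_pow_succ, Nat.div_two_pow_succ] at heq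
  unfold gapJump
  omega

/-- For `i < k`, the highest bit `p` where `v i` and `v k` differ is the split bit of the gap
where `v · / 2 ^ p` steps from even to odd. -/
lemma bitTable_injective : Injective (bitTable v) := by
  refine Injective.of_lt_imp_ne fun i k hik hbits => ?_
  set p := splitScale (v i) (v k) - 1
  have hp : splitScale (v i) (v k) = p + 1 := by
    have := splitScale_pos (hv hik).ne
    omega
  have hdiv : ∀ {a b}, a ≤ b → v a / 2 ^ p ≤ v b / 2 ^ p := fun h =>
    Nat.div_le_div_right (hv.monotone h)
  have hhigh := div_two_pow_eq_iff.2 hp.le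
  rw [Nat.div_two_pow_succ, Nat.div_two_pow_succ] at hhigh
  have hlow : v i / 2 ^ p < v k / 2 ^ p :=
    lt_of_le_of_ne (hdiv hik.le) fun h => by have := div_two_pow_eq_iff.1 h; omega
  obtain ⟨g, hig, hgk, hg₁, hg₂⟩ :=
    Fin.exists_castSucc_le_lt_succ (fun a b h => hdiv h) le_rfl hlow
  have h₁ := hdiv hig
  have h₂ := hdiv hgk
  have hgp : gapBit v g = p := by
    have := splitScale_eq_succ (p := p) (u := v g.castSucc) (v := v g.succ)
      (by rw [Nat.div_two_pow_succ, Nat.div_two_pow_succ]; omega) (by omega)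
    unfold gapBit
    omega
  have hi : v i / 2 ^ p % 2 = 0 := by omega
  have hk : v k / 2 ^ p % 2 = 1 := by omega
  have := congrFun hbits g
  simp [bitTable, hgp, Nat.testBit_eq_decide_div_mod_eq, hi, hk] at this

end Tuple

/-- The components are `t`, the pairs `(p_g, x_g)` and the bit table. -/
abbrev GapProfile (m : ℕ) := ℕ × (Fin (m + 1) → ℕ × ℕ) × (Fin (m + 2) → Fin (m + 1) → Bool)

instance (m : ℕ) : DecidableEq (GapProfile m) :=
  inferInstanceAs (DecidableEq (ℕ × (Fin (m + 1) → ℕ × ℕ) × (Fin (m + 2) → Fin (m + 1) → Bool)))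

def gapProfile {m : ℕ} (v : Fin (m + 2) → ℕ) : GapProfile m :=
  (minGapBit v, fun g => (gapBit v g, gapJump v g), bitTable v)

namespace GapProfile

variable {m : ℕ} (c : GapProfile m)

noncomputable def rank (w : ℕ) : Fin (m + 2) := invFun c.2.2 fun g => w.testBit (c.2.1 g).1

noncomputable def level (w : ℕ) : ℤ :=
  ((w / 2 ^ c.1 : ℕ) : ℤ) - Fin.partialSum (fun g => ((c.2.1 g).2 : ℤ)) (c.rank w)

lemma injective_rank_mod_level :
    Injective fun w : ℕ => ((c.rank w, Fin.ofNat (2 ^ c.1) w), c.level w) := by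
  intro a b h
  simp only [Prod.mk.injEq] at h
  obtain ⟨⟨hrank, hmod⟩, hlevel⟩ := h
  rw [level, level, hrank, sub_left_inj, Nat.cast_inj] at hlevel
  exact Nat.ext_div_mod hlevel (by simpa using congrArg Fin.val hmod)

end GapProfile

section Tuple

variable {m : ℕ} {v : Fin (m + 2) → ℕ} (hv : StrictMono v)
include hv

lemma rank_gapProfile (i : Fin (m + 2)) : (gapProfile v).rank (v i) = i :=
  leftInverse_invFun (bitTable_injective hv) i

lemma level_gapProfile (i : Fin (m + 2)) :
    (gapProfile v).level (v i) = ((v 0 / 2 ^ minGapBit v : ℕ) : ℤ) := by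
  set B : Fin (m + 2) → ℤ := fun j => ((v j / 2 ^ minGapBit v : ℕ) : ℤ)
  have hjump : (fun g : Fin (m + 1) => ((gapJump v g : ℕ) : ℤ)) =
      fun g => -B g.castSucc + B g.succ := by
    funext g
    rw [gapJump, Nat.cast_sub (Nat.div_le_div_right (hv (Fin.castSucc_lt_succ (i := g))).le)]
    ring
  have htel := congrFun (Fin.partialSum_left_neg B) i
  rw [Pi.vadd_apply, vadd_eq_add] at htel
  rw [GapProfile.level, rank_gapProfile hv]
  change B i - Fin.partialSum (fun g => ((gapJump v g : ℕ) : ℤ)) i = B 0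
  rw [hjump]
  linarith

end Tuple

def jumpPairs (t L : ℕ) : Finset (ℕ × ℕ) :=
  (Ico t L ×ˢ range (2 ^ (L + 1 - t))).filter fun q => q.2 < 2 ^ (q.1 + 1 - t)

lemma card_jumpPairs_le (t L : ℕ) : #(jumpPairs t L) ≤ 2 ^ (L + 1 - t) := by
  refine (card_le_card_of_injOn (fun q => 2 ^ (q.1 + 1 - t) + q.2) (fun q hq => ?_)
    fun q hq q' hq' h => ?_).trans_eq (card_range _)
  · simp only [jumpPairs, coe_filter, mem_product, mem_Ico, mem_range, Set.mem_ofPred_eq] at hq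
    simp only [coe_range, Set.mem_Iio]
    calc 2 ^ (q.1 + 1 - t) + q.2 < 2 ^ (q.1 + 1 - t + 1) := by rw [pow_succ]; omega
      _ ≤ 2 ^ (L + 1 - t) := Nat.pow_le_pow_right two_pos (by omega)
  · simp only [jumpPairs, coe_filter, mem_product, mem_Ico, mem_range, Set.mem_ofPred_eq]
      at hq hq'
    obtain ⟨hp, hx⟩ := Nat.eq_of_two_pow_add_eq hq.2 hq'.2 h
    exact Prod.ext (by omega) hx

/-- Fixing the minimal gap to `(t, 1)` keeps the count at `(2 ^ (L - t)) ^ m` rather than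
`(2 ^ (L - t)) ^ (m + 1)`. -/
def gapSet (m t L : ℕ) : Finset (Fin (m + 1) → ℕ × ℕ) :=
  univ.biUnion fun i => Fintype.piFinset fun g => if g = i then {(t, 1)} else jumpPairs t L

lemma card_gapSet_le (m t L : ℕ) : #(gapSet m t L) ≤ (m + 1) * (2 ^ (L + 1 - t)) ^ m := by
  calc #(gapSet m t L)
      ≤ ∑ i : Fin (m + 1),
          #(Fintype.piFinset fun g => if g = i then {(t, 1)} else jumpPairs t L) :=
        card_biUnion_le
    _ ≤ ∑ _i : Fin (m + 1), (2 ^ (L + 1 - t)) ^ m := sum_le_sum fun i _ => by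
        rw [Fintype.card_piFinset, Fin.prod_univ_succAbove _ i]
        simp only [Fin.succAbove_ne, ↓reduceIte, card_singleton, one_mul, prod_const,
          card_univ, Fintype.card_fin]
        exact Nat.pow_le_pow_left (card_jumpPairs_le t L) m
    _ = (m + 1) * (2 ^ (L + 1 - t)) ^ m := by simp

lemma gaps_mem_gapSet {m L : ℕ} {v : Fin (m + 2) → ℕ} (hv : StrictMono v)
    (hL : ∀ i, v i < 2 ^ L) : (fun g => (gapBit v g, gapJump v g)) ∈ gapSet m (minGapBit v) L := by
  obtain ⟨i, hi⟩ := exists_gapBit_eq_minGapBit (v := v)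
  refine mem_biUnion.2 ⟨i, mem_univ _, Fintype.mem_piFinset.2 fun g => ?_⟩
  split_ifs with hg
  · subst hg
    simp [hi, gapJump_eq_one hv hi]
  · have h₁ := minGapBit_le (v := v) g
    have h₂ := gapBit_lt hv hL g
    have h₃ := gapJump_lt hv g
    simp only [jumpPairs, mem_filter, mem_product, mem_Ico, mem_range]
    exact ⟨⟨⟨h₁, h₂⟩, h₃.trans_le (Nat.pow_le_pow_right two_pos (by omega))⟩, h₃⟩

def colorSet (m L : ℕ) (kf : ℕ → ℕ) : Finset (GapProfile m × ℕ) :=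
  (range (L + 1)).biUnion fun t => ({t} ×ˢ gapSet m t L ×ˢ univ) ×ˢ range (kf (2 ^ t))

lemma card_colorSet_le (m L : ℕ) (kf : ℕ → ℕ) :
    #(colorSet m L kf) ≤ ∑ t ∈ range (L + 1),
      (m + 1) * (2 ^ (L + 1 - t)) ^ m * (2 ^ (m + 1)) ^ (m + 2) * kf (2 ^ t) :=
  card_biUnion_le.trans (sum_le_sum fun t _ => by
    simp only [card_product, card_singleton, one_mul, card_univ, Fintype.card_fun,
      Fintype.card_fin, Fintype.card_bool, card_range]
    gcongr
    exact card_gapSet_le m t L)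

lemma sum_range_pow_mul_pow_le {ρ a : ℝ} (hρ₀ : 0 ≤ ρ) (hρ₁ : ρ < 1) (ha : 0 ≤ a) (L : ℕ) :
    ∑ t ∈ range (L + 1), (ρ * a) ^ (L - t) * a ^ t ≤ a ^ L / (1 - ρ) := by
  have hterm : ∀ t ∈ range (L + 1), (ρ * a) ^ (L - t) * a ^ t = a ^ L * ρ ^ (L - t) :=
    fun t ht => by
      rw [mul_pow, mul_assoc, pow_sub_mul_pow a (Nat.lt_succ_iff.1 (mem_range.1 ht)), mul_comm]
  have hreflect := sum_range_reflect (fun i => ρ ^ i) (L + 1)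
  simp only [Nat.add_sub_cancel] at hreflect
  rw [sum_congr rfl hterm, ← mul_sum, hreflect, div_eq_mul_one_div]
  gcongr
  simpa [← range_eq_Ico] using geom_sum_Ico_le_of_lt_one (m := 0) (n := L + 1) hρ₀ hρ₁

/-- Scale `t` contributes `≈ 2 ^ (m (L - t)) · kf (2 ^ t) ≲ 2 ^ (β L) · 2 ^ ((m - β) (L - t))`,
a convergent geometric series since `β > m`. -/
lemma exists_card_colorSet_le {m : ℕ} {kf : ℕ → ℕ} {C β : ℝ} (hC : 0 < C) (hβ : (m : ℝ) < β)
    (hkf : ∀ N, (kf N : ℝ) ≤ C * (N : ℝ) ^ β) :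
    ∃ K, 0 < K ∧ ∀ L, (#(colorSet m L kf) : ℝ) ≤ K * ((2 : ℝ) ^ L) ^ β := by
  set ρ : ℝ := 2 ^ ((m : ℝ) - β)
  set a : ℝ := 2 ^ β
  have hρ₀ : 0 < ρ := by positivity
  have hρ₁ : ρ < 1 := Real.rpow_lt_one_of_one_lt_of_neg one_lt_two (by linarith)
  have hρa : ρ * a = 2 ^ m := by
    rw [← Real.rpow_add two_pos, sub_add_cancel, Real.rpow_natCast]
  set B : ℝ := (m + 1) * 2 ^ m * (2 ^ (m + 1)) ^ (m + 2) * C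
  have hB : 0 < B := by positivity
  refine ⟨B / (1 - ρ), div_pos hB (by linarith), fun L => ?_⟩
  have hterm : ∀ t ∈ range (L + 1),
      (((m + 1) * (2 ^ (L + 1 - t)) ^ m * (2 ^ (m + 1)) ^ (m + 2) * kf (2 ^ t) : ℕ) : ℝ) ≤
        B * ((ρ * a) ^ (L - t) * a ^ t) := fun t ht => by
    have hpow : ((2 : ℝ) ^ (L + 1 - t)) ^ m = 2 ^ m * (ρ * a) ^ (L - t) := by
      rw [hρa, ← pow_mul, ← pow_mul, ← pow_add,
        Nat.sub_add_comm (Nat.lt_succ_iff.1 (mem_range.1 ht))]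
      ring_nf
    have hk := hkf (2 ^ t)
    rw [Nat.cast_pow, Nat.cast_ofNat, ← Real.rpow_pow_comm zero_le_two] at hk
    push_cast
    rw [hpow]
    calc _ ≤ (m + 1) * (2 ^ m * (ρ * a) ^ (L - t)) * (2 ^ (m + 1)) ^ (m + 2) * (C * a ^ t) := by
          gcongr
      _ = _ := by ring
  calc (#(colorSet m L kf) : ℝ)
      ≤ ∑ t ∈ range (L + 1),
          (((m + 1) * (2 ^ (L + 1 - t)) ^ m * (2 ^ (m + 1)) ^ (m + 2) * kf (2 ^ t) : ℕ) : ℝ) := by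
        exact_mod_cast card_colorSet_le m L kf
    _ ≤ ∑ t ∈ range (L + 1), B * ((ρ * a) ^ (L - t) * a ^ t) := sum_le_sum hterm
    _ ≤ B * (a ^ L / (1 - ρ)) := by
        rw [← mul_sum]
        gcongr
        exact sum_range_pow_mul_pow_le hρ₀.le hρ₁ (by positivity) L
    _ = B / (1 - ρ) * ((2 : ℝ) ^ L) ^ β := by
        rw [Real.rpow_pow_comm zero_le_two]
        ring

theorem HContains.mono {W V : Type*} [DecidableEq V] {E : Set (Finset W)}
    {H H' : Set (Finset V)} (h : HContains E H) (hHH' : H ⊆ H') : HContains E H' :=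
  let ⟨φ, hφ, hE⟩ := h
  ⟨φ, hφ, fun e he => hHH' (hE e he)⟩

/-- Connectivity keeps the whole copy inside one level set of `lev`, on which `ψ` is
injective. -/
theorem HContains.of_injective_level {W V U ι : Type*} [DecidableEq V] [DecidableEq U]
    {E : Set (Finset W)} {H : Set (Finset V)} {D : Set (Finset U)}
    (h : HContains E H) (hE : HConnected E) (ψ : V → U) (lev : V → ι)
    (hinj : Injective fun x => (ψ x, lev x)) (hmap : ∀ e ∈ H, e.image ψ ∈ D)
    (hlev : ∀ e ∈ H, ∀ x ∈ e, ∀ y ∈ e, lev x = lev y) : HContains E D := by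
  obtain ⟨φ, hφ, hEH⟩ := h
  have hchain : ∀ u w, Relation.ReflTransGen (fun x y => ∃ a ∈ E, x ∈ a ∧ y ∈ a) u w →
      lev (φ u) = lev (φ w) := by
    intro u w huw
    induction huw with
    | refl => rfl
    | tail _ hstep ih =>
      obtain ⟨a, ha, hx, hy⟩ := hstep
      exact ih.trans (hlev _ (hEH a ha) _ (mem_image_of_mem φ hx) _ (mem_image_of_mem φ hy))
  refine ⟨ψ ∘ φ, fun u hu w hw huw => hφ hu hw (hinj ?_), fun a ha => ?_⟩
  · exact Prod.ext huw (hchain u w (hE u hu w hw))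
  · rw [← image_image]
    exact hmap _ (hEH a ha)

section Edge

variable {m n : ℕ} (e : Finset (Fin n)) (he : e.card = m + 2)

def sortedVerts : Fin (m + 2) → ℕ := fun i => e.orderEmbOfFin he i

lemma sortedVerts_strictMono : StrictMono (sortedVerts e he) :=
  Fin.val_strictMono.comp (e.orderEmbOfFin he).strictMono

lemma sortedVerts_lt (i : Fin (m + 2)) : sortedVerts e he i < n := (e.orderEmbOfFin he i).isLt

lemma image_eq_image_sortedVerts {α : Type*} [DecidableEq α] (f : ℕ → α) :
    e.image (fun w : Fin n => f w) = univ.image fun i => f (sortedVerts e he i) := by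
  conv_lhs => rw [← e.image_orderEmbOfFin_univ he, image_image]
  rfl

lemma exists_sortedVerts_eq {w : Fin n} (hw : w ∈ e) : ∃ i, sortedVerts e he i = w := by
  rw [← e.image_orderEmbOfFin_univ he, mem_image] at hw
  obtain ⟨i, -, rfl⟩ := hw
  exact ⟨i, rfl⟩

end Edge

section Coloring

variable {m : ℕ} {kf : ℕ → ℕ}
  (colfun : ∀ N, {p : Finset (Fin (m + 2) × Fin N) // p ∈ partiteEdges (m + 2) N} → Fin (kf N))

def partiteImage (v : Fin (m + 2) → ℕ) (t : ℕ) : Finset (Fin (m + 2) × Fin (2 ^ t)) :=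
  univ.image fun i => (i, Fin.ofNat (2 ^ t) (v i))

lemma partiteImage_mem (v : Fin (m + 2) → ℕ) (t : ℕ) :
    partiteImage v t ∈ partiteEdges (m + 2) (2 ^ t) :=
  ⟨_, rfl⟩

def tupleColor (v : Fin (m + 2) → ℕ) : GapProfile m × ℕ :=
  (gapProfile v, colfun (2 ^ minGapBit v) ⟨partiteImage v (minGapBit v), partiteImage_mem v _⟩)

lemma tupleColor_mem_colorSet {L : ℕ} {v : Fin (m + 2) → ℕ} (hv : StrictMono v)
    (hL : ∀ i, v i < 2 ^ L) : tupleColor colfun v ∈ colorSet m L kf := by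
  refine mem_biUnion.2 ⟨minGapBit v, mem_range.2 ?_, ?_⟩
  · have := (minGapBit_le (v := v) 0).trans_lt (gapBit_lt hv hL 0)
    omega
  · simp only [tupleColor, gapProfile, mem_product, mem_singleton, mem_univ, and_true, mem_range,
      Fin.isLt, true_and]
    exact gaps_mem_gapSet hv hL

theorem HContains.partite_of_tupleColor {W : Type*} {E : Set (Finset W)} (hE : HConnected E)
    {n : ℕ} {c : GapProfile m} {j : Fin (kf (2 ^ c.1))}
    (h : HContains E {e : Finset (Fin n) |
      ∃ he : e.card = m + 2, tupleColor colfun (sortedVerts e he) = (c, (j : ℕ))}) :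
    HContains E
      {p | ∃ hp : p ∈ partiteEdges (m + 2) (2 ^ c.1), colfun (2 ^ c.1) ⟨p, hp⟩ = j} := by
  refine h.of_injective_level hE (fun w : Fin n => (c.rank w, Fin.ofNat (2 ^ c.1) w))
    (fun w => c.level w) (c.injective_rank_mod_level.comp Fin.val_injective) ?_ ?_
  · rintro e ⟨he, hc⟩
    obtain ⟨rfl, hj⟩ := Prod.mk.inj hc
    have himage : e.image (fun w : Fin n => ((gapProfile (sortedVerts e he)).rank w,
        Fin.ofNat (2 ^ (gapProfile (sortedVerts e he)).1) w)) =
        partiteImage (sortedVerts e he) (gapProfile (sortedVerts e he)).1 := by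
      rw [image_eq_image_sortedVerts e he fun w => ((gapProfile (sortedVerts e he)).rank w,
        Fin.ofNat (2 ^ (gapProfile (sortedVerts e he)).1) w)]
      simp only [rank_gapProfile (sortedVerts_strictMono e he)]
      rfl
    rw [himage]
    exact ⟨partiteImage_mem _ _, Fin.ext hj⟩
  · rintro e ⟨he, hc⟩ x hx y hy
    obtain ⟨rfl, -⟩ := Prod.mk.inj hc
    obtain ⟨i, hi⟩ := exists_sortedVerts_eq e he hx
    obtain ⟨k, hk⟩ := exists_sortedVerts_eq e he hy
    rw [← hi, ← hk]
    exact (level_gapProfile (sortedVerts_strictMono e he) i).trans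
      (level_gapProfile (sortedVerts_strictMono e he) k).symm

theorem exists_coloring_of_partite {W : Type*} {F : Set (Set (Finset W))}
    (hconn : ∀ E ∈ F, HConnected E)
    (hfree : ∀ N (j : Fin (kf N)), ∀ E ∈ F,
      ¬ HContains E {p | ∃ hp : p ∈ partiteEdges (m + 2) N, colfun N ⟨p, hp⟩ = j})
    {n L : ℕ} (hn : n ≤ 2 ^ L) :
    ∃ k ≤ #(colorSet m L kf), ∃ col : {e : Finset (Fin n) // e.card = m + 2} → Fin k,
      ∀ j, ∀ E ∈ F, ¬ HContains E {e | ∃ he : e.card = m + 2, col ⟨e, he⟩ = j} := by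
  set S := univ.image fun e : {e : Finset (Fin n) // e.card = m + 2} =>
    tupleColor colfun (sortedVerts e.1 e.2)
  refine ⟨#S, card_le_card fun c hc => ?_,
    fun e => S.equivFin ⟨_, mem_image_of_mem _ (mem_univ e)⟩, fun j E hE hcopy => ?_⟩
  · obtain ⟨e, -, rfl⟩ := mem_image.1 hc
    exact tupleColor_mem_colorSet colfun (sortedVerts_strictMono _ _)
      fun i => (sortedVerts_lt _ _ i).trans_le hn
  · obtain ⟨e₀, -, he₀⟩ := mem_image.1 (S.equivFin.symm j).2
    refine hfree _ _ E hE (HContains.partite_of_tupleColor colfun (hconn E hE)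
      (c := gapProfile (sortedVerts e₀.1 e₀.2))
      (j := colfun _ ⟨partiteImage (sortedVerts e₀.1 e₀.2) _, partiteImage_mem _ _⟩)
      (hcopy.mono ?_))
    rintro e ⟨he, hej⟩
    exact ⟨he, (congrArg Subtype.val ((Equiv.eq_symm_apply _).2 hej)).trans he₀.symm⟩

end Coloring

theorem statement_0_general (r : ℕ) (hr : 2 ≤ r) (β : ℝ) (hβ : (r : ℝ) - 2 < β)
    (F : Set (Set (Finset ℕ)))
    (hconn : ∀ E ∈ F, HConnected E)
    (hyp : ∃ C : ℝ, 0 < C ∧ ∀ n : ℕ, ∃ k : ℕ, (k : ℝ) ≤ C * (n : ℝ) ^ β ∧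
      ∃ col : {e : Finset (Fin r × Fin n) // e ∈ partiteEdges r n} → Fin k,
        ∀ j : Fin k, ∀ E ∈ F,
          ¬ HContains E {e | ∃ he : e ∈ partiteEdges r n, col ⟨e, he⟩ = j}) :
    ∃ C : ℝ, 0 < C ∧ ∀ n : ℕ, ∃ k : ℕ, (k : ℝ) ≤ C * (n : ℝ) ^ β ∧
      ∃ col : {e : Finset (Fin n) // e.card = r} → Fin k,
        ∀ j : Fin k, ∀ E ∈ F,
          ¬ HContains E {e | ∃ he : e.card = r, col ⟨e, he⟩ = j} := by
  obtain ⟨m, rfl⟩ : ∃ m, r = m + 2 := ⟨r - 2, by omega⟩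
  obtain ⟨C, hC, hpart⟩ := hyp
  choose kf hkf colfun hfree using hpart
  have hβm : (m : ℝ) < β := by push_cast at hβ; linarith
  have hβ₀ : 0 < β := hβm.trans_le' (Nat.cast_nonneg m)
  obtain ⟨K, hK, hcard⟩ := exists_card_colorSet_le hC hβm hkf
  refine ⟨K * 2 ^ β, by positivity, fun n => ?_⟩
  rcases Nat.eq_zero_or_pos n with rfl | hn
  · exact ⟨0, by simp [Real.zero_rpow hβ₀.ne'],
      fun e => absurd (card_le_univ e.1) (by simp [e.2]), fun j => j.elim0⟩
  obtain ⟨k, hk, col, hcol⟩ :=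
    exists_coloring_of_partite colfun hconn hfree (Nat.lt_pow_succ_log_self one_lt_two n).le
  have h2L : (2 : ℝ) ^ (Nat.log 2 n + 1) ≤ 2 * n := by
    rw [pow_succ']
    exact_mod_cast Nat.mul_le_mul_left 2 (Nat.pow_log_le_self 2 hn.ne')
  refine ⟨k, ?_, col, hcol⟩
  calc (k : ℝ) ≤ K * ((2 : ℝ) ^ (Nat.log 2 n + 1)) ^ β := (Nat.cast_le.2 hk).trans (hcard _)
    _ ≤ K * (2 * n) ^ β := by gcongr
    _ = K * 2 ^ β * n ^ β := by rw [Real.mul_rpow zero_le_two (Nat.cast_nonneg n)]; ring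

/-- If the complete `r`-partite `r`-uniform hypergraph `K_{n,…,n}` can be
colored with `O(n^β)` colors (β > r-2) with no color class containing a member of the
family `F` of connected `r`-uniform hypergraphs, then the same holds for `K_n^{(r)}`. -/
theorem statement_0 (r : ℕ) (hr : 2 ≤ r) (β : ℝ) (hβ : (r : ℝ) - 2 < β)
    (F : Set (Set (Finset ℕ)))
    (hconn : ∀ E ∈ F, HConnected E)
    (hunif : ∀ E ∈ F, ∀ e ∈ E, e.card = r)
    (hyp : ∃ C : ℝ, 0 < C ∧ ∀ n : ℕ, ∃ k : ℕ, (k : ℝ) ≤ C * (n : ℝ) ^ β ∧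
      ∃ col : {e : Finset (Fin r × Fin n) // e ∈ partiteEdges r n} → Fin k,
        ∀ j : Fin k, ∀ E ∈ F,
          ¬ HContains E {e | ∃ he : e ∈ partiteEdges r n, col ⟨e, he⟩ = j}) :
    ∃ C : ℝ, 0 < C ∧ ∀ n : ℕ, ∃ k : ℕ, (k : ℝ) ≤ C * (n : ℝ) ^ β ∧
      ∃ col : {e : Finset (Fin n) // e.card = r} → Fin k,
        ∀ j : Fin k, ∀ E ∈ F,
          ¬ HContains E {e | ∃ he : e.card = r, col ⟨e, he⟩ = j} :=
  statement_0_general r hr β hβ F hconn hyp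
end

section
/- Let m ≥ 2, let G be a bipartite graph containing no cycle of length 3, 4, …, 2m, or 2m+1, and let s, t be positive integers with s < 2m and t < 2m. Let H be the (s+t)-uniform hypergraph obtained from G by enlarging each vertex in one part of G to s vertices and each vertex in the other part to t vertices. Then H contains no Berge-C_{2m} and no Berge-C_{2m+1}. -/
/-- `IsBergeCopy G H` : the hypergraph with edge set `H` contains a Berge-`G`:
there are an injection `f` of the vertices of `G` into the vertices of `H` and an
injection `φ` of the edges of `G` into the edges of `H` such that for every edge `e`
of `G`, the hyperedge `φ e` contains the `f`-images of the endpoints of `e`. -/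
def IsBergeCopy {α V : Type*} (G : SimpleGraph α) (H : Set (Finset V)) : Prop :=
  ∃ f : α → V, Function.Injective f ∧
    ∃ φ : Sym2 α → Finset V, Set.InjOn φ G.edgeSet ∧
      ∀ e ∈ G.edgeSet, φ e ∈ H ∧ ∀ v ∈ e, f v ∈ φ e

/-- `SubgraphOf G H` : the graph `H` contains a copy of the graph `G` as a subgraph. -/
def SubgraphOf {α β : Type*} (G : SimpleGraph α) (H : SimpleGraph β) : Prop :=
  ∃ f : α → β, Function.Injective f ∧ ∀ ⦃x y⦄, G.Adj x y → H.Adj (f x) (f y)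

/-- The `(s+t)`-uniform hypergraph obtained from a bipartite graph `G` on `α ⊕ β` by
enlarging each vertex of the first part to `s` vertices and each vertex of the second
part to `t` vertices. -/
def enlargeGraph {α β : Type*} [DecidableEq α] [DecidableEq β]
    (G : SimpleGraph (α ⊕ β)) (s t : ℕ) : Set (Finset ((α × Fin s) ⊕ (β × Fin t))) :=
  {e | ∃ u v, G.Adj (Sum.inl u) (Sum.inr v) ∧
        e = (Finset.univ.image fun i : Fin s => Sum.inl (u, i)) ∪
            (Finset.univ.image fun j : Fin t => Sum.inr (v, j))}

open SimpleGraph in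
private lemma getVert_support_getElem {V : Type*} {G : SimpleGraph V} :
    ∀ {u v : V} (p : G.Walk u v) (i : ℕ) (h : i < p.support.length), p.getVert i = p.support[i]
  | u, _, .nil, i, h => by
      simp only [Walk.support_nil, List.length_cons, List.length_nil] at h
      interval_cases i
      simp [Walk.getVert_zero]
  | u, v, .cons ha q, i, h => by
      cases i with
      | zero => simp [Walk.getVert_zero]
      | succ i =>
          have h' : i < q.support.length := by
            simpa [Walk.support_cons] using h
          have := getVert_support_getElem q i h'
          simpa [Walk.support_cons, Walk.getVert_cons_succ] using this

open scoped Fin.NatCast Fin.CommRing in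
open SimpleGraph in
/-- A cycle walk of length `g` yields a subgraph copy of `cycleGraph g`. -/
private lemma subgraphOf_of_isCycle {V : Type*} {G : SimpleGraph V} {x : V}
    (c : G.Walk x x) (hc : c.IsCycle) :
    SubgraphOf (SimpleGraph.cycleGraph c.length) G := by
  have hlen : 3 ≤ c.length := hc.three_le_length
  have hsupp : c.support.length = c.length + 1 := c.length_support
  have htl : c.support.tail.length = c.length := by
    rcases c.support.eq_nil_or_concat with h | h
    · simp [h] at hsupp
    · simpa [hsupp] using (List.length_tail c.support)
  have hnodup := hc.support_nodup
  haveI : NeZero c.length := ⟨by omega⟩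
  -- getVert at positions 1..length is injective
  have key1 : ∀ i j : ℕ, 1 ≤ i → i ≤ c.length → 1 ≤ j → j ≤ c.length →
      c.getVert i = c.getVert j → i = j := by
    intro i j hi1 hi2 hj1 hj2 hij
    obtain ⟨i', rfl⟩ : ∃ i', i = i' + 1 := ⟨i - 1, by omega⟩
    obtain ⟨j', rfl⟩ : ∃ j', j = j' + 1 := ⟨j - 1, by omega⟩
    have hi' : i' + 1 < c.support.length := by omega
    have hj' : j' + 1 < c.support.length := by omega
    rw [getVert_support_getElem c _ hi', getVert_support_getElem c _ hj'] at hij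
    have hcons : c.support = x :: c.support.tail := c.support_eq_cons
    have hit : i' < c.support.tail.length := by omega
    have hjt : j' < c.support.tail.length := by omega
    have hi'' : c.support.tail[i']'hit = c.support[i' + 1]'hi' := List.getElem_tail _
    have hj'' : c.support.tail[j']'hjt = c.support[j' + 1]'hj' := List.getElem_tail _
    have hij2 : c.support.tail[i']'hit = c.support.tail[j']'hjt :=
      hi''.trans (hij.trans hj''.symm)
    have := (hnodup.getElem_inj_iff).mp hij2
    omega
  have key : ∀ i j : ℕ, i < c.length → j < c.length → c.getVert i = c.getVert j → i = j := by
    intro i j hi hj hij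
    rcases Nat.eq_zero_or_pos i with rfl | hi1
    · rcases Nat.eq_zero_or_pos j with rfl | hj1
      · rfl
      · exfalso
        have h0 : c.getVert 0 = c.getVert c.length := by
          rw [c.getVert_zero, c.getVert_length]
        have := key1 j c.length hj1 (by omega) (by omega) le_rfl (by rw [← hij, ← h0])
        omega
    · rcases Nat.eq_zero_or_pos j with rfl | hj1
      · exfalso
        have h0 : c.getVert 0 = c.getVert c.length := by
          rw [c.getVert_zero, c.getVert_length]
        have := key1 i c.length hi1 (by omega) (by omega) le_rfl (by rw [hij, ← h0])
        omega
      · exact key1 i j hi1 (by omega) hj1 (by omega) hij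
  refine ⟨fun i => c.getVert i.val, ?_, ?_⟩
  · intro i j hij
    exact Fin.ext (key i.val j.val i.isLt j.isLt hij)
  · have h1v : (1 : Fin c.length).val = 1 := by
      rw [Fin.val_one']; exact Nat.mod_eq_of_lt (by omega)
    have main : ∀ i j : Fin c.length, j - i = 1 →
        G.Adj (c.getVert i.val) (c.getVert j.val) := by
      intro i j hij
      have hj : j = i + 1 := by
        rw [sub_eq_iff_eq_add] at hij
        rw [hij]; ring
      have hjval : j.val = (i.val + 1) % c.length := by
        rw [hj, Fin.val_add, h1v]
      rcases Nat.lt_or_ge (i.val + 1) c.length with hlt | hge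
      · rw [hjval, Nat.mod_eq_of_lt hlt]
        exact c.adj_getVert_succ (by omega)
      · have hiv : i.val + 1 = c.length := by omega
        have hjv : j.val = 0 := by rw [hjval, hiv, Nat.mod_self]
        have := c.adj_getVert_succ (i := i.val) (by omega)
        rw [hiv, c.getVert_length] at this
        rw [hjv, c.getVert_zero]
        exact this
    intro i j hadj
    rw [SimpleGraph.cycleGraph_adj'] at hadj
    rcases hadj with h | h
    · exact (main j i (Fin.ext (by rw [h1v]; exact h))).symm
    · exact main i j (Fin.ext (by rw [h1v]; exact h))

open SimpleGraph in
/-- A closed walk starting with an edge not repeated later contains a cycle. -/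
private lemma exists_cycle_of_closed {V : Type*} [DecidableEq V] {G : SimpleGraph V} {u v : V}
    (h : G.Adj u v) (q : G.Walk v u) (hq : s(u, v) ∉ q.edges) :
    ∃ (x : V) (c : G.Walk x x), c.IsCycle ∧ c.length ≤ q.length + 1 := by
  refine ⟨u, Walk.cons h q.bypass, ?_, ?_⟩
  · rw [Walk.cons_isCycle_iff]
    exact ⟨q.bypass_isPath, fun hc => hq (q.edges_bypass_subset hc)⟩
  · simpa using Nat.add_le_add_right q.length_bypass_le 1

open SimpleGraph in
/-- From a chain of "stay or move" steps, build a walk whose edges all come from moves. -/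
private lemma chain_walk {V : Type*} {G : SimpleGraph V} (W : ℕ → V) :
    ∀ (d a b : ℕ), a + d = b →
      (∀ k, a ≤ k → k < b → W k = W (k + 1) ∨ G.Adj (W k) (W (k + 1))) →
      ∃ p : G.Walk (W a) (W b), p.length ≤ d ∧
        ∀ ed ∈ p.edges, ∃ k, a ≤ k ∧ k < b ∧ W k ≠ W (k + 1) ∧ ed = s(W k, W (k + 1))
  | 0, a, b, hab, _ => by
      subst hab
      exact ⟨Walk.nil, by simp⟩
  | d + 1, a, b, hab, hstep => by
      obtain ⟨p, hpl, hpe⟩ := chain_walk W d (a + 1) b (by omega)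
        (fun k hk hk' => hstep k (by omega) hk')
      by_cases hstay : W a = W (a + 1)
      · refine ⟨p.copy hstay.symm rfl, ?_, ?_⟩
        · rw [Walk.length_copy]; omega
        · intro ed hed
          rw [Walk.edges_copy] at hed
          obtain ⟨k, hk1, hk2, hk3, hk4⟩ := hpe ed hed
          exact ⟨k, by omega, hk2, hk3, hk4⟩
      · have hadj : G.Adj (W a) (W (a + 1)) :=
          (hstep a le_rfl (by omega)).resolve_left hstay
        refine ⟨Walk.cons hadj p, ?_, ?_⟩
        · rw [Walk.length_cons]; omega
        · intro ed hed
          rw [Walk.edges_cons, List.mem_cons] at hed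
          rcases hed with rfl | hed
          · exact ⟨a, le_rfl, by omega, hstay, rfl⟩
          · obtain ⟨k, hk1, hk2, hk3, hk4⟩ := hpe ed hed
            exact ⟨k, by omega, hk2, hk3, hk4⟩

open scoped Fin.NatCast Fin.CommRing in
open SimpleGraph in
private lemma berge_aux {α β : Type*} [DecidableEq α] [DecidableEq β]
    (G : SimpleGraph (α ⊕ β)) (s t n : ℕ) (hn : 4 ≤ n) (hs : s < n) (ht : t < n)
    (hG : ∀ g : ℕ, 3 ≤ g → g ≤ n → ¬ SubgraphOf (SimpleGraph.cycleGraph g) G) :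
    ¬ IsBergeCopy (SimpleGraph.cycleGraph n) (enlargeGraph G s t) := by
  classical
  rintro ⟨f, hf, φ, hφ, hmem⟩
  haveI : NeZero n := ⟨by omega⟩
  have h1v : (1 : Fin n).val = 1 := by rw [Fin.val_one']; exact Nat.mod_eq_of_lt (by omega)
  -- the edges of the cycle
  set e : Fin n → Sym2 (Fin n) := fun i => s(i, i + 1) with he_def
  have he : ∀ i : Fin n, e i ∈ (SimpleGraph.cycleGraph n).edgeSet := by
    intro i
    simp only [he_def]
    rw [SimpleGraph.mem_edgeSet, SimpleGraph.cycleGraph_adj']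
    right
    have : i + 1 - i = 1 := by ring
    rw [this]
    exact h1v
  have he_inj : Function.Injective e := by
    intro i j hij
    simp only [he_def, Sym2.eq_iff] at hij
    rcases hij with ⟨h1, _⟩ | ⟨h1, h2⟩
    · exact h1
    · exfalso
      have h20 : (1 + 1 : Fin n) = 0 :=
        add_left_cancel (a := j) (by rw [← add_assoc, ← h1, h2, add_zero])
      have hval : ((1 + 1 : Fin n)).val = 0 := by rw [h20, Fin.val_zero]
      rw [Fin.val_add, h1v, Nat.mod_eq_of_lt (by omega)] at hval
      omega
  have hmem2 : ∀ i : Fin n, φ (e i) ∈ enlargeGraph G s t := fun i => (hmem (e i) (he i)).1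
  choose U V hUV hφe using fun i => hmem2 i
  -- the projection of the Berge cycle vertices
  set w : Fin n → α ⊕ β := fun i => Sum.map Prod.fst Prod.fst (f i) with hw_def
  have hmem' : ∀ (i : Fin n) (x), x ∈ φ (e i) →
      Sum.map Prod.fst Prod.fst x = Sum.inl (U i) ∨
      Sum.map Prod.fst Prod.fst x = Sum.inr (V i) := by
    intro i x hx
    rw [hφe i] at hx
    simp only [Finset.mem_union, Finset.mem_image, Finset.mem_univ, true_and] at hx
    rcases hx with ⟨k, rfl⟩ | ⟨k, rfl⟩
    · left; rfl
    · right; rfl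
  have hv1 : ∀ i : Fin n, w i = Sum.inl (U i) ∨ w i = Sum.inr (V i) := by
    intro i
    refine hmem' i (f i) ((hmem (e i) (he i)).2 i ?_)
    rw [he_def]; exact Sym2.mem_mk_left _ _
  have hv2 : ∀ i : Fin n, w (i + 1) = Sum.inl (U i) ∨ w (i + 1) = Sum.inr (V i) := by
    intro i
    refine hmem' i (f (i + 1)) ((hmem (e i) (he i)).2 (i + 1) ?_)
    rw [he_def]; exact Sym2.mem_mk_right _ _
  set E : Fin n → Sym2 (α ⊕ β) := fun i => s(Sum.inl (U i), Sum.inr (V i)) with hE_def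
  have hE_inj : Function.Injective E := by
    intro i j hij
    rw [hE_def] at hij
    simp only [Sym2.eq_iff] at hij
    rcases hij with ⟨h1, h2⟩ | ⟨h1, _⟩
    · have hU : U i = U j := Sum.inl.inj h1
      have hV : V i = V j := Sum.inr.inj h2
      have : φ (e i) = φ (e j) := by rw [hφe i, hφe j, hU, hV]
      exact he_inj (hφ (he i) (he j) this)
    · exact absurd h1 (by simp)
  have hstep : ∀ i : Fin n, w i = w (i + 1) ∨
      (G.Adj (w i) (w (i + 1)) ∧ s(w i, w (i + 1)) = E i) := by
    intro i
    rcases hv1 i with h1 | h1 <;> rcases hv2 i with h2 | h2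
    · left; rw [h1, h2]
    · right; rw [h1, h2]; exact ⟨hUV i, rfl⟩
    · right; rw [h1, h2]; exact ⟨(hUV i).symm, Sym2.eq_swap⟩
    · left; rw [h1, h2]
  by_cases hall : ∀ i : Fin n, w i = w (i + 1)
  · -- all stays: w is constant, contradicting injectivity of f
    have hconstN : ∀ k : ℕ, w (k : Fin n) = w 0 := by
      intro k
      induction k with
      | zero => simp
      | succ k ih =>
          have : ((k + 1 : ℕ) : Fin n) = (k : Fin n) + 1 := by push_cast; ring
          rw [this, ← hall (k : Fin n), ih]
    have hconst : ∀ i : Fin n, w i = w 0 := by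
      intro i
      have := hconstN i.val
      rwa [Fin.cast_val_eq_self] at this
    rcases hw0 : w 0 with u | v
    · have hfi : ∀ i : Fin n, ∃ k, f i = Sum.inl (u, k) := by
        intro i
        have hwi : w i = Sum.inl u := by rw [hconst i, hw0]
        simp only [hw_def] at hwi
        rcases hfi' : f i with p | p
        · refine ⟨p.2, ?_⟩
          rw [hfi'] at hwi
          obtain ⟨p1, p2⟩ := p
          simp only [Sum.map_inl] at hwi
          simp only [Sum.inl.injEq, Prod.mk.injEq]
          exact ⟨Sum.inl.inj hwi, trivial⟩
        · rw [hfi'] at hwi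
          simp at hwi
      choose g hg using hfi
      have hginj : Function.Injective g := by
        intro i j hij
        apply hf
        rw [hg i, hg j, hij]
      have := Fintype.card_le_of_injective g hginj
      simp only [Fintype.card_fin] at this
      omega
    · have hfi : ∀ i : Fin n, ∃ k, f i = Sum.inr (v, k) := by
        intro i
        have hwi : w i = Sum.inr v := by rw [hconst i, hw0]
        simp only [hw_def] at hwi
        rcases hfi' : f i with p | p
        · rw [hfi'] at hwi
          simp at hwi
        · refine ⟨p.2, ?_⟩
          rw [hfi'] at hwi
          obtain ⟨p1, p2⟩ := p
          simp only [Sum.map_inr] at hwi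
          simp only [Sum.inr.injEq, Prod.mk.injEq]
          exact ⟨Sum.inr.inj hwi, trivial⟩
      choose g hg using hfi
      have hginj : Function.Injective g := by
        intro i j hij
        apply hf
        rw [hg i, hg j, hij]
      have := Fintype.card_le_of_injective g hginj
      simp only [Fintype.card_fin] at this
      omega
  · push_neg at hall
    obtain ⟨i0, hi0⟩ := hall
    set W : ℕ → α ⊕ β := fun k => w ((k : Fin n) + i0) with hW_def
    have hWsucc : ∀ k : ℕ, W (k + 1) = w (((k : Fin n) + i0) + 1) := by
      intro k
      rw [hW_def]
      congr 1
      push_cast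
      ring
    have hWstep : ∀ k : ℕ, W k = W (k + 1) ∨
        (G.Adj (W k) (W (k + 1)) ∧ s(W k, W (k + 1)) = E ((k : Fin n) + i0)) := by
      intro k
      rw [hWsucc k, hW_def]
      exact hstep ((k : Fin n) + i0)
    obtain ⟨q, hql, hqe⟩ := chain_walk (G := G) W (n - 1) 1 n (by omega)
      (fun k _ _ => (hWstep k).imp id And.left)
    have hWn0 : W n = W 0 := by
      rw [hW_def]
      simp [Fin.natCast_self]
    have hW0 : W 0 = w i0 := by rw [hW_def]; simp
    have hW1 : W 1 = w (i0 + 1) := by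
      rw [hW_def]
      congr 1
      simp [add_comm]
    have hne01 : W 0 ≠ W 1 := by rw [hW0, hW1]; exact hi0
    have hstep0 := (hWstep 0).resolve_left hne01
    have h01 : G.Adj (W 0) (W 1) := hstep0.1
    have hedge0 : s(W 0, W 1) = E ((0 : ℕ) + i0) := hstep0.2
    set q2 : G.Walk (W 1) (W 0) := q.copy rfl hWn0 with hq2_def
    have hnotin : s(W 0, W 1) ∉ q2.edges := by
      intro hin
      rw [hq2_def, SimpleGraph.Walk.edges_copy] at hin
      obtain ⟨k, hk1, hk2, hk3, hk4⟩ := hqe _ hin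
      have hedgek : s(W k, W (k + 1)) = E ((k : Fin n) + i0) :=
        ((hWstep k).resolve_left hk3).2
      have : ((k : Fin n) + i0) = ((0 : ℕ) : Fin n) + i0 := by
        apply hE_inj
        rw [← hedgek, ← hk4, hedge0]
      have hk0 : (k : Fin n) = ((0 : ℕ) : Fin n) := add_right_cancel this
      have : ((k : Fin n)).val = 0 := by rw [hk0]; simp
      rw [Fin.val_cast_of_lt hk2] at this
      omega
    obtain ⟨x, c, hc, hclen⟩ := exists_cycle_of_closed h01 q2 hnotin
    have hq2l : q2.length ≤ n - 1 := by
      rw [hq2_def, SimpleGraph.Walk.length_copy]; exact hql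
    exact hG c.length hc.three_le_length (by omega) (subgraphOf_of_isCycle c hc)

/-- Enlarging a bipartite graph with no cycles of length `3,…,2m+1`,
with each vertex of one part enlarged to `s < 2m` vertices and each vertex of the other
part to `t < 2m` vertices, yields an `(s+t)`-uniform hypergraph with no Berge-`C_{2m}`
and no Berge-`C_{2m+1}`. -/
theorem statement_5 {α β : Type*} [DecidableEq α] [DecidableEq β] (m : ℕ) (hm : 2 ≤ m)
    (G : SimpleGraph (α ⊕ β))
    (hbipA : ∀ u v : α, ¬ G.Adj (Sum.inl u) (Sum.inl v))
    (hbipB : ∀ u v : β, ¬ G.Adj (Sum.inr u) (Sum.inr v))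
    (hG : ∀ g : ℕ, 3 ≤ g → g ≤ 2 * m + 1 → ¬ SubgraphOf (SimpleGraph.cycleGraph g) G)
    (s t : ℕ) (hs : 0 < s) (ht : 0 < t) (hs' : s < 2 * m) (ht' : t < 2 * m) :
    ¬ IsBergeCopy (SimpleGraph.cycleGraph (2 * m)) (enlargeGraph G s t) ∧
    ¬ IsBergeCopy (SimpleGraph.cycleGraph (2 * m + 1)) (enlargeGraph G s t) := by
  constructor
  · exact berge_aux G s t (2 * m) (by omega) (by omega) (by omega)
      (fun g hg1 hg2 => hG g hg1 (by omega))
  · exact berge_aux G s t (2 * m + 1) (by omega) (by omega) (by omega)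
      (fun g hg1 hg2 => hG g hg1 (by omega))
end

section
/- Let a, b ≥ 2, let G be a bipartite graph containing no copy of K_{a,b}, and let s, t be positive integers with s < a+b and t < a+b. Let H be the (s+t)-uniform hypergraph obtained from G by enlarging each vertex in one part of G to s vertices and each vertex in the other part to t vertices. Then H contains no Berge-K_{a,b}. -/
open Sum

section BergeAux

variable {a b : ℕ} {α β : Type*}

lemma berge_step (π1 : Fin a → α ⊕ β) (π2 : Fin b → α ⊕ β)
    (U : Fin a → Fin b → α) (V : Fin a → Fin b → β)
    (H1 : ∀ i j, π1 i = inl (U i j) ∨ π1 i = inr (V i j))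
    (H2 : ∀ i j, π2 j = inl (U i j) ∨ π2 j = inr (V i j))
    (hUV : ∀ i j i' j', U i j = U i' j' → V i j = V i' j' → i = i' ∧ j = j')
    {u : α} {j1 j2 : Fin b} (hj : j1 ≠ j2)
    (h1 : π2 j1 = inl u) (h2 : π2 j2 = inl u) :
    ∀ i, π1 i = inl u := by
  intro i
  have hU1 : U i j1 = u := by
    rcases H2 i j1 with h | h
    · exact Sum.inl.inj (h.symm.trans h1)
    · exact absurd (h.symm.trans h1) (by simp)
  have hU2 : U i j2 = u := by
    rcases H2 i j2 with h | h
    · exact Sum.inl.inj (h.symm.trans h2)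
    · exact absurd (h.symm.trans h2) (by simp)
  have hVne : V i j1 ≠ V i j2 := fun hV => hj (hUV i j1 i j2 (hU1.trans hU2.symm) hV).2
  rcases H1 i j1 with h | h
  · rw [h, hU1]
  · rcases H1 i j2 with h' | h'
    · rw [h', hU2]
    · exact absurd (Sum.inr.inj (h.symm.trans h')) hVne

lemma berge_pairB (ha : 2 ≤ a) (π1 : Fin a → α ⊕ β) (π2 : Fin b → α ⊕ β)
    (U : Fin a → Fin b → α) (V : Fin a → Fin b → β)
    (H1 : ∀ i j, π1 i = inl (U i j) ∨ π1 i = inr (V i j))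
    (H2 : ∀ i j, π2 j = inl (U i j) ∨ π2 j = inr (V i j))
    (hUV : ∀ i j i' j', U i j = U i' j' → V i j = V i' j' → i = i' ∧ j = j')
    (hcard : ∀ u : α, ¬ ((∀ i, π1 i = inl u) ∧ (∀ j, π2 j = inl u)))
    {u : α} {j1 j2 : Fin b} (hj : j1 ≠ j2)
    (h1 : π2 j1 = inl u) (h2 : π2 j2 = inl u) : False := by
  have hall1 : ∀ i, π1 i = inl u := berge_step π1 π2 U V H1 H2 hUV hj h1 h2
  have hall2 : ∀ j, π2 j = inl u := by
    refine berge_step π2 π1 (fun j i => U i j) (fun j i => V i j) (fun j i => H2 i j) (fun j i => H1 i j)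
      (fun j i j' i' hU hV => ⟨(hUV i j i' j' hU hV).2, (hUV i j i' j' hU hV).1⟩)
      (j1 := ⟨0, by omega⟩) (j2 := ⟨1, by omega⟩) (Fin.ne_of_val_ne (by simp))
      (hall1 _) (hall1 _)
  exact hcard u ⟨hall1, hall2⟩

lemma berge_pairA (ha : 2 ≤ a) (hb : 2 ≤ b) (π1 : Fin a → α ⊕ β) (π2 : Fin b → α ⊕ β)
    (U : Fin a → Fin b → α) (V : Fin a → Fin b → β)
    (H1 : ∀ i j, π1 i = inl (U i j) ∨ π1 i = inr (V i j))
    (H2 : ∀ i j, π2 j = inl (U i j) ∨ π2 j = inr (V i j))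
    (hUV : ∀ i j i' j', U i j = U i' j' → V i j = V i' j' → i = i' ∧ j = j')
    (hcard : ∀ u : α, ¬ ((∀ i, π1 i = inl u) ∧ (∀ j, π2 j = inl u)))
    {u : α} {i1 i2 : Fin a} (hi : i1 ≠ i2)
    (h1 : π1 i1 = inl u) (h2 : π1 i2 = inl u) : False := by
  have hall2 : ∀ j, π2 j = inl u := by
    refine berge_step π2 π1 (fun j i => U i j) (fun j i => V i j) (fun j i => H2 i j) (fun j i => H1 i j)
      (fun j i j' i' hU hV => ⟨(hUV i j i' j' hU hV).2, (hUV i j i' j' hU hV).1⟩)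
      hi h1 h2
  exact berge_pairB ha π1 π2 U V H1 H2 hUV hcard
    (j1 := ⟨0, by omega⟩) (j2 := ⟨1, by omega⟩) (Fin.ne_of_val_ne (by simp))
    (hall2 _) (hall2 _)

lemma berge_cross (ha : 2 ≤ a) (hb : 2 ≤ b) (π1 : Fin a → α ⊕ β) (π2 : Fin b → α ⊕ β)
    (U : Fin a → Fin b → α) (V : Fin a → Fin b → β)
    (H1 : ∀ i j, π1 i = inl (U i j) ∨ π1 i = inr (V i j))
    (H2 : ∀ i j, π2 j = inl (U i j) ∨ π2 j = inr (V i j))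
    (hUV : ∀ i j i' j', U i j = U i' j' → V i j = V i' j' → i = i' ∧ j = j')
    (hcard : ∀ u : α, ¬ ((∀ i, π1 i = inl u) ∧ (∀ j, π2 j = inl u)))
    {u : α} {i1 : Fin a} {j2 : Fin b}
    (h1 : π1 i1 = inl u) (h2 : π2 j2 = inl u) : False := by
  have hUj : ∀ j, U i1 j = u := by
    intro j
    rcases H1 i1 j with h | h
    · exact Sum.inl.inj (h.symm.trans h1)
    · exact absurd (h.symm.trans h1) (by simp)
  have hUi : ∀ i, U i j2 = u := by
    intro i
    rcases H2 i j2 with h | h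
    · exact Sum.inl.inj (h.symm.trans h2)
    · exact absurd (h.symm.trans h2) (by simp)
  by_cases hA : ∃ i, i ≠ i1 ∧ π1 i = inl u
  · obtain ⟨i, hne, hi⟩ := hA
    exact berge_pairA ha hb π1 π2 U V H1 H2 hUV hcard hne hi h1
  by_cases hB : ∃ j, j ≠ j2 ∧ π2 j = inl u
  · obtain ⟨j, hne, hjj⟩ := hB
    exact berge_pairB ha π1 π2 U V H1 H2 hUV hcard hne hjj h2
  push_neg at hA hB
  have hA' : ∀ i, i ≠ i1 → π1 i = inr (V i j2) := by
    intro i hi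
    rcases H1 i j2 with h | h
    · exact absurd (by rw [h, hUi i]) (hA i hi)
    · exact h
  have hB' : ∀ j, j ≠ j2 → π2 j = inr (V i1 j) := by
    intro j hj
    rcases H2 i1 j with h | h
    · exact absurd (by rw [h, hUj j]) (hB j hj)
    · exact h
  haveI : Nontrivial (Fin a) := Fin.nontrivial_iff_two_le.2 ha
  haveI : Nontrivial (Fin b) := Fin.nontrivial_iff_two_le.2 hb
  obtain ⟨i3, hi3⟩ := exists_ne i1
  obtain ⟨j3, hj3⟩ := exists_ne j2
  have e1 : V i3 j3 = V i3 j2 := by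
    rcases H1 i3 j3 with h | h
    · exact absurd ((hA' i3 hi3).symm.trans h) (by simp)
    · exact (Sum.inr.inj ((hA' i3 hi3).symm.trans h)).symm
  have e2 : V i1 j3 = V i3 j3 := by
    rcases H2 i3 j3 with h | h
    · exact absurd ((hB' j3 hj3).symm.trans h) (by simp)
    · exact Sum.inr.inj ((hB' j3 hj3).symm.trans h)
  exact hi3 (hUV i1 j3 i3 j2 ((hUj j3).trans (hUi i3).symm) (e2.trans e1)).1.symm

lemma berge_half (ha : 2 ≤ a) (hb : 2 ≤ b) (π1 : Fin a → α ⊕ β) (π2 : Fin b → α ⊕ β)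
    (U : Fin a → Fin b → α) (V : Fin a → Fin b → β)
    (H1 : ∀ i j, π1 i = inl (U i j) ∨ π1 i = inr (V i j))
    (H2 : ∀ i j, π2 j = inl (U i j) ∨ π2 j = inr (V i j))
    (hUV : ∀ i j i' j', U i j = U i' j' → V i j = V i' j' → i = i' ∧ j = j')
    (hcard : ∀ u : α, ¬ ((∀ i, π1 i = inl u) ∧ (∀ j, π2 j = inl u)))
    {u : α} {w1 w2 : Fin a ⊕ Fin b} (hw : w1 ≠ w2)
    (h1 : Sum.elim π1 π2 w1 = inl u) (h2 : Sum.elim π1 π2 w2 = inl u) : False := by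
  cases w1 with
  | inl i1 =>
    cases w2 with
    | inl i2 =>
      exact berge_pairA ha hb π1 π2 U V H1 H2 hUV hcard
        (fun h => hw (by rw [h])) h1 h2
    | inr j2 => exact berge_cross ha hb π1 π2 U V H1 H2 hUV hcard h1 h2
  | inr j1 =>
    cases w2 with
    | inl i2 => exact berge_cross ha hb π1 π2 U V H1 H2 hUV hcard h2 h1
    | inr j2 =>
      exact berge_pairB ha π1 π2 U V H1 H2 hUV hcard
        (fun h => hw (by rw [h])) h1 h2

end BergeAux



/-- Enlarging a `K_{a,b}`-free bipartite graph (with `a, b ≥ 2`),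
with each vertex of one part enlarged to `s < a+b` vertices and each vertex of the other
part to `t < a+b` vertices, yields an `(s+t)`-uniform hypergraph with no Berge-`K_{a,b}`. -/
theorem statement_6 {α β : Type*} [DecidableEq α] [DecidableEq β] (a b : ℕ)
    (ha : 2 ≤ a) (hb : 2 ≤ b)
    (G : SimpleGraph (α ⊕ β))
    (hbipA : ∀ u v : α, ¬ G.Adj (Sum.inl u) (Sum.inl v))
    (hbipB : ∀ u v : β, ¬ G.Adj (Sum.inr u) (Sum.inr v))
    (hG : ¬ SubgraphOf (completeBipartiteGraph (Fin a) (Fin b)) G)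
    (s t : ℕ) (hs : 0 < s) (ht : 0 < t) (hs' : s < a + b) (ht' : t < a + b) :
    ¬ IsBergeCopy (completeBipartiteGraph (Fin a) (Fin b)) (enlargeGraph G s t) := by
  rintro ⟨f, hf, φ, hφ, hmem⟩
  classical
  set p : (α × Fin s) ⊕ (β × Fin t) → α ⊕ β := Sum.map Prod.fst Prod.fst with hp
  have hedge : ∀ (i : Fin a) (j : Fin b),
      s(Sum.inl i, Sum.inr j) ∈ (completeBipartiteGraph (Fin a) (Fin b)).edgeSet := by
    intro i j; simp [SimpleGraph.mem_edgeSet]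
  have main : ∀ (i : Fin a) (j : Fin b), ∃ u v, G.Adj (Sum.inl u) (Sum.inr v) ∧
      φ s(Sum.inl i, Sum.inr j) =
        (Finset.univ.image fun k : Fin s => Sum.inl (u, k)) ∪
        (Finset.univ.image fun k : Fin t => Sum.inr (v, k)) ∧
      (p (f (Sum.inl i)) = Sum.inl u ∨ p (f (Sum.inl i)) = Sum.inr v) ∧
      (p (f (Sum.inr j)) = Sum.inl u ∨ p (f (Sum.inr j)) = Sum.inr v) := by
    intro i j
    obtain ⟨hE, hv⟩ := hmem _ (hedge i j)
    obtain ⟨u, v, hadj, heq⟩ := hE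
    have hblock : ∀ x ∈ φ s(Sum.inl i, Sum.inr j), p x = Sum.inl u ∨ p x = Sum.inr v := by
      intro x hx
      rw [heq] at hx
      simp only [Finset.mem_union, Finset.mem_image, Finset.mem_univ, true_and] at hx
      rcases hx with ⟨k, hk⟩ | ⟨k, hk⟩
      · left; rw [← hk]; rfl
      · right; rw [← hk]; rfl
    exact ⟨u, v, hadj, heq, hblock _ (hv _ (by simp)), hblock _ (hv _ (by simp))⟩
  choose U V hadj hφeq hm1 hm2 using main
  have hUV : ∀ i j i' j', U i j = U i' j' → V i j = V i' j' → i = i' ∧ j = j' := by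
    intro i j i' j' hU hV
    have hee : s(Sum.inl i, Sum.inr j) = (s(Sum.inl i', Sum.inr j') :
        Sym2 (Fin a ⊕ Fin b)) := by
      apply hφ (hedge i j) (hedge i' j')
      rw [hφeq i j, hφeq i' j', hU, hV]
    rw [Sym2.eq_iff] at hee
    rcases hee with ⟨e1, e2⟩ | ⟨e1, e2⟩
    · exact ⟨Sum.inl_injective e1, Sum.inr_injective e2⟩
    · simp at e1
  -- cardinality constraints
  have hcard_all : ∀ x : α ⊕ β, (∀ w : Fin a ⊕ Fin b, p (f w) = x) → False := by
    intro x hall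
    cases x with
    | inl u =>
      have hex : ∀ w : Fin a ⊕ Fin b, ∃ k : Fin s, f w = Sum.inl (u, k) := by
        intro w
        have hw := hall w
        cases hfw : f w with
        | inl y =>
          rw [hfw] at hw
          obtain ⟨y1, y2⟩ := y
          simp only [hp, Sum.map_inl, Sum.inl.injEq] at hw
          exact ⟨y2, by rw [hw]⟩
        | inr y => rw [hfw] at hw; simp [hp] at hw
      choose g hg using hex
      have hginj : Function.Injective g := by
        intro w1 w2 h
        apply hf
        rw [hg w1, hg w2, h]
      have hc := Fintype.card_le_of_injective g hginj
      simp [Fintype.card_sum] at hc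
      omega
    | inr v =>
      have hex : ∀ w : Fin a ⊕ Fin b, ∃ k : Fin t, f w = Sum.inr (v, k) := by
        intro w
        have hw := hall w
        cases hfw : f w with
        | inr y =>
          rw [hfw] at hw
          obtain ⟨y1, y2⟩ := y
          simp only [hp, Sum.map_inr, Sum.inr.injEq] at hw
          exact ⟨y2, by rw [hw]⟩
        | inl y => rw [hfw] at hw; simp [hp] at hw
      choose g hg using hex
      have hginj : Function.Injective g := by
        intro w1 w2 h
        apply hf
        rw [hg w1, hg w2, h]
      have hc := Fintype.card_le_of_injective g hginj
      simp [Fintype.card_sum] at hc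
      omega
  set π1 : Fin a → α ⊕ β := fun i => p (f (Sum.inl i)) with hπ1
  set π2 : Fin b → α ⊕ β := fun j => p (f (Sum.inr j)) with hπ2
  have hcard_l : ∀ u : α, ¬ ((∀ i, π1 i = Sum.inl u) ∧ (∀ j, π2 j = Sum.inl u)) := by
    rintro u ⟨hc1, hc2⟩
    exact hcard_all (Sum.inl u) (by rintro (i | j); exacts [hc1 i, hc2 j])
  have hcard_r : ∀ v : β,
      ¬ ((∀ i, (π1 i).swap = Sum.inl v) ∧ ∀ j, (π2 j).swap = Sum.inl v) := by
    rintro v ⟨hc1, hc2⟩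
    have hswap : ∀ x : α ⊕ β, x.swap = Sum.inl v → x = Sum.inr v := by
      intro x hx; cases x <;> simp_all
    exact hcard_all (Sum.inr v)
      (by rintro (i | j); exacts [hswap _ (hc1 i), hswap _ (hc2 j)])
  have hm1' : ∀ i j, (π1 i).swap = Sum.inl (V i j) ∨ (π1 i).swap = Sum.inr (U i j) := by
    intro i j
    rcases hm1 i j with h | h
    · right; rw [show π1 i = Sum.inl (U i j) from h]; rfl
    · left; rw [show π1 i = Sum.inr (V i j) from h]; rfl
  have hm2' : ∀ i j, (π2 j).swap = Sum.inl (V i j) ∨ (π2 j).swap = Sum.inr (U i j) := by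
    intro i j
    rcases hm2 i j with h | h
    · right; rw [show π2 j = Sum.inl (U i j) from h]; rfl
    · left; rw [show π2 j = Sum.inr (V i j) from h]; rfl
  have hinj : Function.Injective (fun w : Fin a ⊕ Fin b => p (f w)) := by
    intro w1 w2 heq
    by_contra hne
    have heq' : Sum.elim π1 π2 w1 = Sum.elim π1 π2 w2 := by
      cases w1 <;> cases w2 <;> exact heq
    cases hx : Sum.elim π1 π2 w1 with
    | inl u =>
      exact berge_half ha hb π1 π2 U V hm1 hm2 hUV hcard_l hne hx (heq' ▸ hx)
    | inr v =>
      refine berge_half ha hb (fun i => (π1 i).swap) (fun j => (π2 j).swap)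
        V U hm1' hm2'
        (fun i j i' j' hV hU => hUV i j i' j' hU hV) hcard_r (u := v) hne ?_ ?_
      · cases w1 with
        | inl i => rw [show Sum.elim π1 π2 (Sum.inl i) = π1 i from rfl] at hx
                   show (π1 i).swap = Sum.inl v; rw [hx]; rfl
        | inr j => rw [show Sum.elim π1 π2 (Sum.inr j) = π2 j from rfl] at hx
                   show (π2 j).swap = Sum.inl v; rw [hx]; rfl
      · have hx2 : Sum.elim π1 π2 w2 = Sum.inr v := heq' ▸ hx
        cases w2 with
        | inl i => rw [show Sum.elim π1 π2 (Sum.inl i) = π1 i from rfl] at hx2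
                   show (π1 i).swap = Sum.inl v; rw [hx2]; rfl
        | inr j => rw [show Sum.elim π1 π2 (Sum.inr j) = π2 j from rfl] at hx2
                   show (π2 j).swap = Sum.inl v; rw [hx2]; rfl
  apply hG
  refine ⟨fun w => p (f w), hinj, ?_⟩
  have hadj' : ∀ (i : Fin a) (j : Fin b), G.Adj (p (f (Sum.inl i))) (p (f (Sum.inr j))) := by
    intro i j
    have hne : p (f (Sum.inl i)) ≠ p (f (Sum.inr j)) := by
      intro h
      have := hinj h
      simp at this
    rcases hm1 i j with h1 | h1 <;> rcases hm2 i j with h2 | h2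
    · exact absurd (h1.trans h2.symm) hne
    · rw [h1, h2]; exact hadj i j
    · rw [h1, h2]; exact (hadj i j).symm
    · exact absurd (h1.trans h2.symm) hne
  rintro (i | j) (i' | j') hxy
  · simp at hxy
  · exact hadj' i j'
  · exact (hadj' i' j).symm
  · simp at hxy
end

section
/- Let s, t ≥ 1 and let G_1, …, G_T be bipartite graphs on common parts A and B, each of size n, whose union is the complete bipartite graph K_{n,n}. For each i, let H_i be the (s+t)-uniform hypergraph obtained by enlarging each vertex of A to s vertices and each vertex of B to t vertices in G_i. Let F be a family of hypergraphs such that H_i contains no member of F for every i. Then the edge set of the complete (s+t)-partite (s+t)-uniform hypergraph with n vertices in each part can be partitioned into T · n^{s+t−2} subhypergraphs, none of which contains a member of F. -/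
/-- The `(s+t)`-uniform hypergraph obtained from a bipartite graph, given by its set `E`
of cross edges (pairs), by enlarging each vertex of the first part to `s` vertices and
each vertex of the second part to `t` vertices. -/
def enlargePairs {γ δ : Type*} [DecidableEq γ] [DecidableEq δ]
    (E : Set (γ × δ)) (s t : ℕ) : Set (Finset ((γ × Fin s) ⊕ (δ × Fin t))) :=
  {e | ∃ p ∈ E, e = (Finset.univ.image fun i : Fin s => Sum.inl (p.1, i)) ∪
                    (Finset.univ.image fun j : Fin t => Sum.inr (p.2, j))}

set_option maxHeartbeats 1000000

/-- If `G_1, …, G_T` are bipartite graphs on parts of size `n` whose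
union is `K_{n,n}`, and for each `i` the `(s+t)`-uniform hypergraph obtained from `G_i`
by enlarging one part to `s` vertices and the other to `t` vertices contains no member of
`F`, then the edge set of the complete `(s+t)`-partite `(s+t)`-uniform hypergraph with
`n` vertices in each part can be partitioned into `T · n^{s+t-2}` subhypergraphs, none of
which contains a member of `F`. -/
theorem statement_7 (s t n T : ℕ) (hs : 0 < s) (ht : 0 < t)
    (G : Fin T → Set (Fin n × Fin n))
    (hcover : ∀ p : Fin n × Fin n, ∃ i : Fin T, p ∈ G i)
    (F : Set (Set (Finset ℕ)))
    (hfree : ∀ i : Fin T, ∀ E ∈ F, ¬ HContains E (enlargePairs (G i) s t)) :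
    ∃ col : {e : Finset (Fin (s + t) × Fin n) // e ∈ partiteEdges (s + t) n} →
        Fin (T * n ^ (s + t - 2)),
      ∀ j : Fin (T * n ^ (s + t - 2)), ∀ E ∈ F,
        ¬ HContains E {e | ∃ he : e ∈ partiteEdges (s + t) n, col ⟨e, he⟩ = j} := by
  have hst : 0 < s + t := by omega
  rcases Nat.eq_zero_or_pos n with hn | hn
  · subst hn
    refine ⟨fun e => Fin.elim0 ((e.2.choose) ⟨0, hst⟩), ?_⟩
    rintro j E hE ⟨f, -, -⟩
    exact Fin.elim0 (f 0).2
  haveI : NeZero n := ⟨hn.ne'⟩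
  -- coordinates
  set k0 : Fin (s + t) := ⟨0, hst⟩ with hk0
  set k1 : Fin (s + t) := ⟨s, by omega⟩ with hk1
  -- the color type
  set C := Fin T × (Fin (s - 1) → Fin n) × (Fin (t - 1) → Fin n) with hC
  have hcard : Fintype.card C = T * n ^ (s + t - 2) := by
    simp only [hC, Fintype.card_prod, Fintype.card_fun, Fintype.card_fin]
    rw [← pow_add]
    have hexp : s - 1 + (t - 1) = s + t - 2 := by omega
    rw [hexp]
  set ε : C ≃ Fin (T * n ^ (s + t - 2)) := Fintype.equivFinOfCardEq hcard with hε
  -- the color of an edge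
  set colorOf : {e : Finset (Fin (s + t) × Fin n) // e ∈ partiteEdges (s + t) n} → C :=
    fun e =>
      ((hcover (e.2.choose k0, e.2.choose k1)).choose,
       fun m => e.2.choose ⟨(m : ℕ) + 1, by omega⟩ - e.2.choose k0,
       fun m => e.2.choose ⟨s + 1 + (m : ℕ), by omega⟩ - e.2.choose k1) with hcolorOf
  refine ⟨fun e => ε (colorOf e), ?_⟩
  rintro j E hE ⟨f, hinjf, hedgef⟩
  set cdat : C := ε.symm j with hcdat
  set i : Fin T := cdat.1 with hi
  set dA : Fin (s - 1) → Fin n := cdat.2.1 with hdA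
  set dB : Fin (t - 1) → Fin n := cdat.2.2 with hdB
  set DA : Fin s → Fin n := fun m =>
    if hm : (m : ℕ) = 0 then 0 else dA ⟨(m : ℕ) - 1, by omega⟩ with hDA
  set DB : Fin t → Fin n := fun m =>
    if hm : (m : ℕ) = 0 then 0 else dB ⟨(m : ℕ) - 1, by omega⟩ with hDB
  set g : Fin (s + t) × Fin n → (Fin n × Fin s) ⊕ (Fin n × Fin t) :=
    fun p => if h : (p.1 : ℕ) < s then Sum.inl (p.2 - DA ⟨p.1, h⟩, ⟨p.1, h⟩)
      else Sum.inr (p.2 - DB ⟨(p.1 : ℕ) - s, by omega⟩, ⟨(p.1 : ℕ) - s, by omega⟩) with hg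
  have hginj : Function.Injective g := by
    rintro ⟨a, u⟩ ⟨b, v⟩ h
    simp only [hg] at h
    by_cases h1 : (a : ℕ) < s <;> by_cases h2 : (b : ℕ) < s
    · rw [dif_pos h1, dif_pos h2] at h
      rw [Sum.inl.injEq, Prod.mk.injEq] at h
      obtain ⟨h5, h6⟩ := h
      rw [Fin.mk.injEq] at h6
      have hab : a = b := Fin.ext h6
      subst hab
      exact Prod.ext rfl (sub_left_inj.mp h5)
    · rw [dif_pos h1, dif_neg h2] at h
      exact absurd h (by simp)
    · rw [dif_neg h1, dif_pos h2] at h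
      exact absurd h (by simp)
    · rw [dif_neg h1, dif_neg h2] at h
      rw [Sum.inr.injEq, Prod.mk.injEq] at h
      obtain ⟨h5, h6⟩ := h
      rw [Fin.mk.injEq] at h6
      have hab : a = b := Fin.ext (by omega)
      subst hab
      exact Prod.ext rfl (sub_left_inj.mp h5)
  -- key: edges of class j map under g to edges of enlargePairs (G i)
  have key : ∀ e' (he' : e' ∈ partiteEdges (s + t) n), ε (colorOf ⟨e', he'⟩) = j →
      e'.image g ∈ enlargePairs (G i) s t := by
    intro e' he' hcol
    have hcol' : colorOf ⟨e', he'⟩ = cdat := by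
      rw [hcdat, Equiv.eq_symm_apply, hcol]
    set x : Fin (s + t) → Fin n := he'.choose with hxdef
    have hx : e' = Finset.univ.image fun k => (k, x k) := he'.choose_spec
    have hch : (hcover (x k0, x k1)).choose = i := congrArg Prod.fst hcol'
    have hdAeq : ∀ m : Fin (s - 1), x ⟨(m : ℕ) + 1, by omega⟩ - x k0 = dA m :=
      fun m => congrArg (fun c => c.2.1 m) hcol'
    have hdBeq : ∀ m : Fin (t - 1), x ⟨s + 1 + (m : ℕ), by omega⟩ - x k1 = dB m :=
      fun m => congrArg (fun c => c.2.2 m) hcol'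
    have hpair : (x k0, x k1) ∈ G i := hch ▸ (hcover (x k0, x k1)).choose_spec
    have hm1 : ∀ m : Fin s, (m : ℕ) < s + t := fun m => by omega
    have hDAx : ∀ m : Fin s, DA m = x ⟨(m : ℕ), hm1 m⟩ - x k0 := by
      intro m
      simp only [hDA]
      split_ifs with hm
      · have h9 : (⟨(m : ℕ), hm1 m⟩ : Fin (s + t)) = k0 := Fin.ext (by simp [hk0, hm])
        rw [h9, sub_self]
      · rw [← hdAeq ⟨(m : ℕ) - 1, by omega⟩]
        congr 2
        simp
        omega
    have hm2 : ∀ m : Fin t, s + (m : ℕ) < s + t := fun m => by omega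
    have hDBx : ∀ m : Fin t, DB m = x ⟨s + (m : ℕ), hm2 m⟩ - x k1 := by
      intro m
      simp only [hDB]
      split_ifs with hm
      · have h9 : (⟨s + (m : ℕ), hm2 m⟩ : Fin (s + t)) = k1 := Fin.ext (by simp [hk1, hm])
        rw [h9, sub_self]
      · rw [← hdBeq ⟨(m : ℕ) - 1, by omega⟩]
        congr 2
        simp
        omega
    have hgx : ∀ k : Fin (s + t), g (k, x k) =
        if h : (k : ℕ) < s then Sum.inl (x k0, ⟨(k : ℕ), h⟩)
        else Sum.inr (x k1, ⟨(k : ℕ) - s, by omega⟩) := by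
      intro k
      simp only [hg]
      split_ifs with h
      · rw [hDAx]
        simp only [Fin.val_mk, Fin.eta, sub_sub_cancel]
      · rw [hDBx]
        simp only [Fin.val_mk]
        have h9 : s + ((k : ℕ) - s) = (k : ℕ) := by omega
        simp only [h9, Fin.eta, sub_sub_cancel]
    refine ⟨(x k0, x k1), hpair, ?_⟩
    rw [hx, Finset.image_image]
    ext a
    simp only [Finset.mem_image, Finset.mem_union, Finset.mem_univ, true_and,
      Function.comp_apply]
    constructor
    · rintro ⟨k, rfl⟩
      rw [hgx k]
      split_ifs with h
      · exact Or.inl ⟨⟨(k : ℕ), h⟩, rfl⟩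
      · exact Or.inr ⟨⟨(k : ℕ) - s, by omega⟩, rfl⟩
    · rintro (⟨m, rfl⟩ | ⟨m, rfl⟩)
      · refine ⟨⟨(m : ℕ), hm1 m⟩, ?_⟩
        rw [hgx, dif_pos m.isLt]
      · refine ⟨⟨s + (m : ℕ), hm2 m⟩, ?_⟩
        rw [hgx, dif_neg (show ¬ ((⟨s + (m : ℕ), hm2 m⟩ : Fin (s + t)) : ℕ) < s by
          simp only [Fin.val_mk]; omega)]
        refine congrArg _ (Prod.ext rfl (Fin.ext ?_))
        simp
  refine hfree i E hE ⟨g ∘ f, ?_, ?_⟩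
  · exact (hginj.injOn).comp hinjf (Set.mapsTo_univ _ _)
  · intro e he
    obtain ⟨he', hcol⟩ := hedgef e he
    rw [← Finset.image_image]
    exact key _ he' hcol
end
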